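/- arXiv:1701.01970 — 2 statements merged into one kernel-verified Lean document; each statement's English description precedes it below -/
import Mathlib

section
/- Let n ∈ ℕ, let \tilde{R}_n be a symmetrized Hammersley type point set with N = 2^{n+2} points (for an arbitrary fixed choice function σ), and let D be its local discrepancy function. For all j1, j2 ∈ ℕ₀ with j1 ≥ n or j2 ≥ n, and all m1 ∈ {0,…,2^{j1}−1}, m2 ∈ {0,…,2^{j2}−1}, the Haar coefficient satisfies |μ_{(j1,j2),(m1,m2)}(D)| = 2^{−2(j1+j2+2)}. -/
/-!
The local discrepancy is `(1/N) ∑_z 1[x_z < t₁] 1[y_z < t₂] - t₁ t₂`, a sum of products, so its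
Haar coefficient is a sum of products of one-dimensional coefficients. The coefficient
`∫ 1[x < t] h_{j,m}(t) dt` vanishes when `x` is a dyadic rational of level `j`: then the jump of
`1[x < ·]` misses the interior of the support of `h_{j,m}`, and `h_{j,m}` has mean zero. All
coordinates of the points of `R̃_n` are dyadic of level `n`, so for `j₁ ≥ n` or `j₂ ≥ n` only the
volume term survives, and `∫ t h_{j,m}(t) dt = -2^{-2(j+1)}` gives the value.
-/

open MeasureTheory Set

/-- The L∞-normalized Haar function `h_{j,m}` on `[0,1)`: it is `+1` on the left half
`[2m/2^{j+1}, (2m+1)/2^{j+1})` of the dyadic interval `I_{j,m}`, `-1` on the right half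
`[(2m+1)/2^{j+1}, (2m+2)/2^{j+1})`, and `0` elsewhere. -/
noncomputable def haar (j m : ℕ) (t : ℝ) : ℝ :=
  if (2 * m : ℝ) / 2 ^ (j + 1) ≤ t ∧ t < (2 * m + 1 : ℝ) / 2 ^ (j + 1) then 1
  else if (2 * m + 1 : ℝ) / 2 ^ (j + 1) ≤ t ∧ t < (2 * m + 2 : ℝ) / 2 ^ (j + 1) then -1
  else 0

/-- First coordinate of a point of the Hammersley type point set:
`t_n/2 + t_{n-1}/2^2 + ⋯ + t_1/2^n`, where the index `i : Fin n` corresponds to `t_{i+1}`,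
so the digit `t i` gets divided by `2^{n - i}`. -/
noncomputable def hamX (n : ℕ) (t : Fin n → Bool) : ℝ :=
  ∑ i : Fin n, (if t i then (1 : ℝ) else 0) / 2 ^ (n - i.val)

/-- Second coordinate of a point of the Hammersley type point set:
`s_1/2 + s_2/2^2 + ⋯ + s_n/2^n` with `s_i = t_i` if `σ i = false` and `s_i = 1 - t_i`
if `σ i = true`, i.e. `s_i = t_i XOR σ i`. -/
noncomputable def hamY (n : ℕ) (σ : Fin n → Bool) (t : Fin n → Bool) : ℝ :=
  ∑ i : Fin n, (if (t i).xor (σ i) then (1 : ℝ) else 0) / 2 ^ (i.val + 1)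

/-- The points of the symmetrized Hammersley type multiset `R̃_n`, parametrized by a digit
vector `t` and two reflection bits: `(x,y)`, `(x,1-y)`, `(1-x,y)`, `(1-x,1-y)`. -/
noncomputable def symPoint (n : ℕ) (σ : Fin n → Bool) (z : (Fin n → Bool) × Bool × Bool) :
    ℝ × ℝ :=
  (if z.2.1 then 1 - hamX n z.1 else hamX n z.1,
   if z.2.2 then 1 - hamY n σ z.1 else hamY n σ z.1)

/-- The local discrepancy function of the symmetrized Hammersley type multiset `R̃_n`
with `N = 2^{n+2}` points counted with multiplicity. -/
noncomputable def discSym (n : ℕ) (σ : Fin n → Bool) (t1 t2 : ℝ) : ℝ :=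
  (∑ z : (Fin n → Bool) × Bool × Bool,
      if (symPoint n σ z).1 < t1 ∧ (symPoint n σ z).2 < t2 then (1 : ℝ) else 0) / 2 ^ (n + 2)
    - t1 * t2

open AddSubgroup

theorem integral_integral_sum_mul_sub_mul {α β ι : Type*} [MeasurableSpace α]
    [MeasurableSpace β] [Fintype ι] {μ : Measure α} {ν : Measure β} {f : ι → α → ℝ}
    {g : ι → β → ℝ} {f₀ : α → ℝ} {g₀ : β → ℝ} (hf : ∀ i, Integrable (f i) μ)
    (hg : ∀ i, Integrable (g i) ν) (hf₀ : Integrable f₀ μ) (hg₀ : Integrable g₀ ν) :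
    ∫ x, ∫ y, (∑ i, f i x * g i y - f₀ x * g₀ y) ∂ν ∂μ =
      ∑ i, (∫ x, f i x ∂μ) * (∫ y, g i y ∂ν) - (∫ x, f₀ x ∂μ) * ∫ y, g₀ y ∂ν := by
  have inner (x : α) : ∫ y, (∑ i, f i x * g i y - f₀ x * g₀ y) ∂ν =
      ∑ i, f i x * (∫ y, g i y ∂ν) - f₀ x * ∫ y, g₀ y ∂ν := by
    rw [integral_sub (integrable_finsetSum _ fun i _ => (hg i).const_mul _) (hg₀.const_mul _),
      integral_finsetSum _ fun i _ => (hg i).const_mul _]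
    simp only [integral_const_mul]
  simp only [inner]
  rw [integral_sub (integrable_finsetSum _ fun i _ => (hf i).mul_const _) (hf₀.mul_const _),
    integral_finsetSum _ fun i _ => (hf i).mul_const _]
  simp only [integral_mul_const]

section Haar

variable {j m : ℕ}

theorem haar_eq_indicator_sub (j m : ℕ) (t : ℝ) :
    haar j m t = (Ico ((2 * m : ℝ) / 2 ^ (j + 1)) ((2 * m + 1) / 2 ^ (j + 1))).indicator 1 t
      - (Ico ((2 * m + 1 : ℝ) / 2 ^ (j + 1)) ((2 * m + 2) / 2 ^ (j + 1))).indicator 1 t := by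
  unfold haar
  by_cases h₁ : (2 * m : ℝ) / 2 ^ (j + 1) ≤ t ∧ t < (2 * m + 1 : ℝ) / 2 ^ (j + 1) <;>
  by_cases h₂ : (2 * m + 1 : ℝ) / 2 ^ (j + 1) ≤ t ∧ t < (2 * m + 2 : ℝ) / 2 ^ (j + 1) <;>
    simp [h₁, h₂]
  exact absurd h₂.1 (not_le.2 h₁.2)

theorem measurable_haar (j m : ℕ) : Measurable (haar j m) := by
  simp only [funext (haar_eq_indicator_sub j m)]
  exact (measurable_const.indicator measurableSet_Ico).sub
    (measurable_const.indicator measurableSet_Ico)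

theorem abs_haar_le_one (j m : ℕ) (t : ℝ) : |haar j m t| ≤ 1 := by
  unfold haar; split_ifs <;> norm_num

theorem MeasureTheory.IntegrableOn.mul_haar {f : ℝ → ℝ} {s : Set ℝ} {μ : Measure ℝ}
    (hf : IntegrableOn f s μ) : IntegrableOn (fun t => f t * haar j m t) s μ :=
  hf.mul_bdd (measurable_haar j m).aestronglyMeasurable
    (Filter.Eventually.of_forall fun t => abs_haar_le_one j m t)

theorem setIntegral_Ico_mul_haar (hm : m < 2 ^ j) {f : ℝ → ℝ}
    (hf : IntegrableOn f (Ico 0 1)) :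
    ∫ t in Ico 0 1, f t * haar j m t =
      (∫ t in (2 * m : ℝ) / 2 ^ (j + 1)..(2 * m + 1) / 2 ^ (j + 1), f t)
        - ∫ t in (2 * m + 1 : ℝ) / 2 ^ (j + 1)..(2 * m + 2) / 2 ^ (j + 1), f t := by
  have h₀ : (0 : ℝ) ≤ 2 * m / 2 ^ (j + 1) := by positivity
  have h₁ : (2 * m : ℝ) / 2 ^ (j + 1) ≤ (2 * m + 1) / 2 ^ (j + 1) := by gcongr; linarith
  have h₂ : (2 * m + 1 : ℝ) / 2 ^ (j + 1) ≤ (2 * m + 2) / 2 ^ (j + 1) := by gcongr; linarith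
  have h₃ : (2 * m + 2 : ℝ) / 2 ^ (j + 1) ≤ 1 := by
    rw [div_le_one (by positivity), pow_succ]
    exact_mod_cast (by omega : 2 * m + 2 ≤ 2 ^ j * 2)
  have piece {a b : ℝ} (ha : 0 ≤ a) (hab : a ≤ b) (hb : b ≤ 1) :
      ∫ t in Ico 0 1, (Ico a b).indicator f t = ∫ t in a..b, f t := by
    rw [integral_indicator measurableSet_Ico, Measure.restrict_restrict measurableSet_Ico,
      inter_eq_left.2 (Ico_subset_Ico ha hb), integral_Ico_eq_integral_Ioc,
      intervalIntegral.integral_of_le hab]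
  simp only [haar_eq_indicator_sub, mul_sub, ← indicator_mul_right, Pi.one_apply, mul_one]
  rw [integral_sub (hf.indicator measurableSet_Ico) (hf.indicator measurableSet_Ico),
    piece h₀ h₁ (h₂.trans h₃), piece (h₀.trans h₁) h₂ h₃]

theorem setIntegral_mul_haar_eq_zero (hm : m < 2 ^ j) {f : ℝ → ℝ}
    (hf : IntegrableOn f (Ico 0 1)) (C : ℝ)
    (hC : ∀ t ∈ Ioc ((2 * m : ℝ) / 2 ^ (j + 1)) ((2 * m + 2) / 2 ^ (j + 1)), f t = C) :
    ∫ t in Ico 0 1, f t * haar j m t = 0 := by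
  have h₁ : (2 * m : ℝ) / 2 ^ (j + 1) ≤ (2 * m + 1) / 2 ^ (j + 1) := by gcongr; linarith
  have h₂ : (2 * m + 1 : ℝ) / 2 ^ (j + 1) ≤ (2 * m + 2) / 2 ^ (j + 1) := by gcongr; linarith
  rw [setIntegral_Ico_mul_haar hm hf,
    intervalIntegral.integral_congr_ae (g := fun _ => C) (Filter.Eventually.of_forall
      fun t ht => hC t (Ioc_subset_Ioc_right h₂ ((uIoc_of_le h₁) ▸ ht))),
    intervalIntegral.integral_congr_ae (g := fun _ => C) (Filter.Eventually.of_forall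
      fun t ht => hC t (Ioc_subset_Ioc_left h₁ ((uIoc_of_le h₂) ▸ ht))),
    intervalIntegral.integral_const, intervalIntegral.integral_const]
  ring

theorem setIntegral_id_mul_haar (hm : m < 2 ^ j) :
    ∫ t in Ico 0 1, t * haar j m t = -(1 / 2 ^ (2 * (j + 1))) := by
  rw [setIntegral_Ico_mul_haar (f := fun t => t) hm
      (continuous_id.integrableOn_Icc.mono_set Ico_subset_Icc_self), integral_id, integral_id,
    pow_mul']
  field_simp
  ring

theorem integrableOn_ite_lt (z : ℝ) :
    IntegrableOn (fun t : ℝ => if z < t then (1 : ℝ) else 0) (Ico 0 1) := by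
  refine Measure.integrableOn_of_bounded (M := 1) measure_Ico_lt_top.ne
    (Measurable.ite measurableSet_Ioi measurable_const measurable_const).aestronglyMeasurable
    (Filter.Eventually.of_forall fun t => ?_)
  split_ifs <;> norm_num

theorem setIntegral_ite_lt_mul_haar_eq_zero (hm : m < 2 ^ j) {z : ℝ}
    (hz : z ∈ zmultiples ((2 : ℝ) ^ j)⁻¹) :
    ∫ t in Ico 0 1, (if z < t then (1 : ℝ) else 0) * haar j m t = 0 := by
  obtain ⟨k, rfl⟩ := mem_zmultiples_iff.1 hz
  have hm₀ : (2 * m : ℝ) / 2 ^ (j + 1) = k • ((2 : ℝ) ^ j)⁻¹ + (m - k) / 2 ^ j := by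
    rw [zsmul_eq_mul, pow_succ]; field_simp; ring
  have hm₂ : (2 * m + 2 : ℝ) / 2 ^ (j + 1) = k • ((2 : ℝ) ^ j)⁻¹ + (m + 1 - k) / 2 ^ j := by
    rw [zsmul_eq_mul, pow_succ]; field_simp; ring
  rcases le_or_gt k m with hk | hk
  · refine setIntegral_mul_haar_eq_zero hm (integrableOn_ite_lt _) 1 fun t ht => if_pos ?_
    have : (0 : ℝ) ≤ (m - k) / 2 ^ j :=
      div_nonneg (sub_nonneg.2 (by exact_mod_cast hk)) (by positivity)
    linarith [hm₀ ▸ ht.1]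
  · refine setIntegral_mul_haar_eq_zero hm (integrableOn_ite_lt _) 0 fun t ht => if_neg ?_
    have hk' : (m : ℝ) + 1 ≤ k := by exact_mod_cast hk
    have : (m + 1 - k : ℝ) / 2 ^ j ≤ 0 :=
      div_nonpos_of_nonpos_of_nonneg (by linarith) (by positivity)
    linarith [hm₂ ▸ ht.2]

end Haar

section LocalDiscrepancy

variable {ι : Type*} [Fintype ι]

noncomputable def localDisc (p : ι → ℝ × ℝ) (N t₁ t₂ : ℝ) : ℝ :=
  (∑ i, if (p i).1 < t₁ ∧ (p i).2 < t₂ then (1 : ℝ) else 0) / N - t₁ * t₂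

theorem integral_integral_localDisc_mul_haar (p : ι → ℝ × ℝ) (N : ℝ) (j₁ m₁ j₂ m₂ : ℕ) :
    ∫ t₁ in Ico 0 1, ∫ t₂ in Ico 0 1, localDisc p N t₁ t₂ * haar j₁ m₁ t₁ * haar j₂ m₂ t₂ =
      (∑ i, (∫ t in Ico 0 1, (if (p i).1 < t then (1 : ℝ) else 0) * haar j₁ m₁ t) *
          ∫ t in Ico 0 1, (if (p i).2 < t then (1 : ℝ) else 0) * haar j₂ m₂ t) / N
        - (∫ t in Ico 0 1, t * haar j₁ m₁ t) * ∫ t in Ico 0 1, t * haar j₂ m₂ t := by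
  have hid : IntegrableOn (fun t : ℝ => t) (Ico 0 1) :=
    continuous_id.integrableOn_Icc.mono_set Ico_subset_Icc_self
  have split (t₁ t₂ : ℝ) : localDisc p N t₁ t₂ * haar j₁ m₁ t₁ * haar j₂ m₂ t₂ =
      ∑ i, (if (p i).1 < t₁ then (1 : ℝ) else 0) * haar j₁ m₁ t₁ / N *
          ((if (p i).2 < t₂ then (1 : ℝ) else 0) * haar j₂ m₂ t₂)
        - t₁ * haar j₁ m₁ t₁ * (t₂ * haar j₂ m₂ t₂) := by
    simp only [localDisc, sub_mul, Finset.sum_div, Finset.sum_mul]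
    congr 1
    · refine Finset.sum_congr rfl fun i _ => ?_
      rw [← mul_one (1 : ℝ), ← ite_zero_mul_ite_zero, mul_one]
      ring
    · ring
  simp only [split]
  rw [integral_integral_sum_mul_sub_mul
    (fun i => ((integrableOn_ite_lt _).mul_haar).div_const N)
    (fun i => (integrableOn_ite_lt _).mul_haar) hid.mul_haar hid.mul_haar, Finset.sum_div]
  simp only [integral_div, div_mul_eq_mul_div]

end LocalDiscrepancy

theorem inv_two_pow_mem_zmultiples {k j : ℕ} (h : k ≤ j) :
    ((2 : ℝ) ^ k)⁻¹ ∈ zmultiples ((2 : ℝ) ^ j)⁻¹ := by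
  refine mem_zmultiples_iff.2 ⟨2 ^ (j - k), ?_⟩
  rw [zsmul_eq_mul, Int.cast_pow, Int.cast_ofNat, ← div_eq_mul_inv,
    div_eq_iff (by positivity), ← pow_sub_mul_pow (2 : ℝ) h]
  field_simp

theorem hamX_mem_zmultiples (n : ℕ) (t : Fin n → Bool) :
    hamX n t ∈ zmultiples ((2 : ℝ) ^ n)⁻¹ :=
  sum_mem fun i _ => by
    split_ifs
    · rw [one_div]; exact inv_two_pow_mem_zmultiples (Nat.sub_le n i)
    · rw [zero_div]; exact zero_mem _

theorem hamY_mem_zmultiples (n : ℕ) (σ t : Fin n → Bool) :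
    hamY n σ t ∈ zmultiples ((2 : ℝ) ^ n)⁻¹ :=
  sum_mem fun i _ => by
    split_ifs
    · rw [one_div]; exact inv_two_pow_mem_zmultiples i.isLt
    · rw [zero_div]; exact zero_mem _

theorem one_sub_mem_zmultiples_inv_two_pow {n : ℕ} {x : ℝ}
    (hx : x ∈ zmultiples ((2 : ℝ) ^ n)⁻¹) : 1 - x ∈ zmultiples ((2 : ℝ) ^ n)⁻¹ :=
  sub_mem (by simpa using inv_two_pow_mem_zmultiples (Nat.zero_le n)) hx

theorem symPoint_fst_mem_zmultiples (n : ℕ) (σ : Fin n → Bool)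
    (z : (Fin n → Bool) × Bool × Bool) :
    (symPoint n σ z).1 ∈ zmultiples ((2 : ℝ) ^ n)⁻¹ := by
  unfold symPoint
  dsimp only
  split_ifs
  exacts [one_sub_mem_zmultiples_inv_two_pow (hamX_mem_zmultiples n z.1),
    hamX_mem_zmultiples n z.1]

theorem symPoint_snd_mem_zmultiples (n : ℕ) (σ : Fin n → Bool)
    (z : (Fin n → Bool) × Bool × Bool) :
    (symPoint n σ z).2 ∈ zmultiples ((2 : ℝ) ^ n)⁻¹ := by
  unfold symPoint
  dsimp only
  split_ifs
  exacts [one_sub_mem_zmultiples_inv_two_pow (hamY_mem_zmultiples n σ z.1),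
    hamY_mem_zmultiples n σ z.1]

theorem discSym_eq_localDisc (n : ℕ) (σ : Fin n → Bool) :
    discSym n σ = localDisc (symPoint n σ) (2 ^ (n + 2)) :=
  rfl

/-- Proposition (iii): for the local discrepancy `D` of the symmetrized Hammersley type
multiset `R̃_n`, if `j₁ ≥ n` or `j₂ ≥ n` then `|μ_{(j₁,j₂),(m₁,m₂)}(D)| = 2^{-2(j₁+j₂+2)}`. -/
theorem disc_haar_coeff_large (n : ℕ) (σ : Fin n → Bool) (j1 j2 m1 m2 : ℕ)
    (hj : n ≤ j1 ∨ n ≤ j2) (h1 : m1 < 2 ^ j1) (h2 : m2 < 2 ^ j2) :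
    |∫ t1 in Set.Ico (0 : ℝ) 1, ∫ t2 in Set.Ico (0 : ℝ) 1,
      discSym n σ t1 t2 * haar j1 m1 t1 * haar j2 m2 t2| = 1 / 2 ^ (2 * (j1 + j2 + 2)) := by
  have hpoint (z : (Fin n → Bool) × Bool × Bool) :
      (∫ t in Ico 0 1, (if (symPoint n σ z).1 < t then (1 : ℝ) else 0) * haar j1 m1 t) *
        ∫ t in Ico 0 1, (if (symPoint n σ z).2 < t then (1 : ℝ) else 0) * haar j2 m2 t = 0 := by
    rcases hj with hn | hn
    · rw [setIntegral_ite_lt_mul_haar_eq_zero h1 (zmultiples_le_of_mem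
        (inv_two_pow_mem_zmultiples hn) (symPoint_fst_mem_zmultiples n σ z)), zero_mul]
    · rw [setIntegral_ite_lt_mul_haar_eq_zero h2 (zmultiples_le_of_mem
        (inv_two_pow_mem_zmultiples hn) (symPoint_snd_mem_zmultiples n σ z)), mul_zero]
  rw [discSym_eq_localDisc, integral_integral_localDisc_mul_haar,
    Finset.sum_eq_zero fun z _ => hpoint z, setIntegral_id_mul_haar h1,
    setIntegral_id_mul_haar h2, zero_div, zero_sub, abs_neg, neg_mul_neg,
    abs_of_pos (by positivity)]
  field_simp
  ring
end

section
/- Let n ∈ ℕ, let \tilde{R}_n be a symmetrized Hammersley type point set with N = 2^{n+2} points (for an arbitrary fixed choice function σ), and let D be its local discrepancy function. For every k ∈ ℕ₀ with k ≥ n and every m ∈ {0,…,2^k−1}, |μ_{(−1,k),(0,m)}(D)| = |∫_{[0,1)^2} D(t)·h_{k,m}(t2) dt| = 2^{−(2k+3)}, and likewise |μ_{(k,−1),(m,0)}(D)| = 2^{−(2k+3)}. -/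
open MeasureTheory Set

/-!
Write `D(t₁,t₂) = N⁻¹ ∑_z 1[x_z < t₁] 1[y_z < t₂] - t₁ t₂`. Every coordinate of a point of
`R̃_n` is a multiple of `2^{-n}`, hence of `2^{-k}` for `k ≥ n`, and a step `1[y < t]` at such a
grid point does not jump inside the support of `h_{k,m}`, so it is orthogonal to `h_{k,m}`.
Only the term `-t₁ t₂` survives, and both coefficients equal
`-(∫₀¹ t dt) (∫₀¹ t h_{k,m}(t) dt) = 2^{-1} · 2^{-(2k+2)}`.
-/

def OnDyadicGrid (k : ℕ) (y : ℝ) : Prop :=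
  ∃ q : ℕ, q ≤ 2 ^ k ∧ y = q / 2 ^ k

namespace OnDyadicGrid

variable {k n : ℕ} {y : ℝ}

lemma mem_Icc (hy : OnDyadicGrid k y) : y ∈ Icc 0 1 := by
  obtain ⟨q, hq, rfl⟩ := hy
  exact ⟨by positivity, (div_le_one (by positivity)).2 (by exact_mod_cast hq)⟩

lemma mono (hy : OnDyadicGrid n y) (hnk : n ≤ k) : OnDyadicGrid k y := by
  obtain ⟨q, hq, rfl⟩ := hy
  have hpow : 2 ^ k = 2 ^ n * 2 ^ (k - n) := by rw [← pow_add, Nat.add_sub_cancel' hnk]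
  refine ⟨q * 2 ^ (k - n), ?_, ?_⟩
  · rw [hpow]; exact Nat.mul_le_mul_right _ hq
  · push_cast
    rw [show (2 : ℝ) ^ k = 2 ^ n * 2 ^ (k - n) by exact_mod_cast hpow]
    field_simp

lemma one_sub (hy : OnDyadicGrid k y) : OnDyadicGrid k (1 - y) := by
  obtain ⟨q, hq, rfl⟩ := hy
  refine ⟨2 ^ k - q, Nat.sub_le _ _, ?_⟩
  rw [Nat.cast_sub hq]; push_cast; field_simp

lemma bit_add_div_two (hy : OnDyadicGrid k y) (b : Bool) :
    OnDyadicGrid (k + 1) (((if b then 1 else 0) + y) / 2) := by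
  obtain ⟨q, hq, rfl⟩ := hy
  refine ⟨(if b then 2 ^ k else 0) + q, ?_, ?_⟩
  · rw [pow_succ]; split <;> omega
  · cases b <;> simp [pow_succ] <;> field_simp

end OnDyadicGrid

lemma onDyadicGrid_binary (n : ℕ) (b : Fin n → Bool) :
    OnDyadicGrid n (∑ i : Fin n, (if b i then (1 : ℝ) else 0) / 2 ^ (i.val + 1)) := by
  induction n with
  | zero => exact ⟨0, by simp, by simp⟩
  | succ n ih =>
    convert (ih (fun i => b i.succ)).bit_add_div_two (b 0) using 1
    rw [Fin.sum_univ_succ, add_div, Finset.sum_div]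
    simp only [Fin.val_zero, Fin.val_succ, pow_succ]
    congr 1
    · ring
    · refine Finset.sum_congr rfl fun i _ => ?_
      ring

lemma onDyadicGrid_hamX (n : ℕ) (t : Fin n → Bool) : OnDyadicGrid n (hamX n t) := by
  convert onDyadicGrid_binary n (t ∘ Fin.rev) using 1
  rw [hamX, ← Equiv.sum_comp Fin.revPerm]
  refine Finset.sum_congr rfl fun i _ => ?_
  simp only [Fin.revPerm_apply, Function.comp_apply, Fin.val_rev]
  congr 2
  omega

lemma onDyadicGrid_hamY (n : ℕ) (σ t : Fin n → Bool) : OnDyadicGrid n (hamY n σ t) :=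
  onDyadicGrid_binary n _

lemma onDyadicGrid_symPoint_fst (n : ℕ) (σ : Fin n → Bool) (z : (Fin n → Bool) × Bool × Bool) :
    OnDyadicGrid n (symPoint n σ z).1 := by
  have h := onDyadicGrid_hamX n z.1
  dsimp only [symPoint]; split
  exacts [h.one_sub, h]

lemma onDyadicGrid_symPoint_snd (n : ℕ) (σ : Fin n → Bool) (z : (Fin n → Bool) × Bool × Bool) :
    OnDyadicGrid n (symPoint n σ z).2 := by
  have h := onDyadicGrid_hamY n σ z.1
  dsimp only [symPoint]; split
  exacts [h.one_sub, h]

lemma ite_lt_eq_indicator (y : ℝ) :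
    (fun t : ℝ => if y < t then (1 : ℝ) else 0) = (Ioi y).indicator 1 := by
  ext t; simp [indicator_apply]

lemma integrableOn_step (y u v : ℝ) :
    IntegrableOn (fun t : ℝ => if y < t then (1 : ℝ) else 0) (Ico u v) := by
  rw [ite_lt_eq_indicator]
  exact (integrableOn_const measure_Ico_lt_top.ne).indicator measurableSet_Ioi

lemma integral_Ico_step (y u v : ℝ) :
    ∫ t in Ico u v, (if y < t then (1 : ℝ) else 0) = max (v - max u y) 0 := by
  rw [ite_lt_eq_indicator, integral_indicator_one measurableSet_Ioi,
    measureReal_restrict_apply measurableSet_Ioi]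
  rcases lt_or_ge y u with hyu | hyu
  · have : Ioi y ∩ Ico u v = Ico u v := inter_eq_right.2 fun t ht => hyu.trans_le ht.1
    rw [this, max_eq_left hyu.le, Real.volume_real_Ico]
  · have : Ioi y ∩ Ico u v = Ioo y v := by
      ext t; simp only [mem_inter_iff, mem_Ioi, mem_Ico, mem_Ioo]
      constructor
      · rintro ⟨hyt, -, htv⟩; exact ⟨hyt, htv⟩
      · rintro ⟨hyt, htv⟩; exact ⟨hyt, hyu.trans hyt.le, htv⟩
    rw [this, max_eq_right hyu, Real.volume_real_Ioo]

lemma integrableOn_Ico_id (u v : ℝ) : IntegrableOn (fun t : ℝ => t) (Ico u v) :=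
  continuous_id.integrableOn_Icc.mono_set Ico_subset_Icc_self

lemma integral_Ico_id {u v : ℝ} (huv : u ≤ v) : ∫ t in Ico u v, t = (v ^ 2 - u ^ 2) / 2 := by
  rw [integral_Ico_eq_integral_Ioo, ← integral_Ioc_eq_integral_Ioo,
    ← intervalIntegral.integral_of_le huv, integral_id]

lemma two_mul_add_two_div_two_pow_le_one {k m : ℕ} (hm : m < 2 ^ k) :
    (2 * m + 2 : ℝ) / 2 ^ (k + 1) ≤ 1 := by
  rw [div_le_one (by positivity), pow_succ]
  have : (m : ℝ) + 1 ≤ 2 ^ k := by exact_mod_cast hm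
  linarith

lemma mul_haar_eq_indicator_sub (f : ℝ → ℝ) (k m : ℕ) (t : ℝ) :
    f t * haar k m t =
      (Ico ((2 * m : ℝ) / 2 ^ (k + 1)) ((2 * m + 1 : ℝ) / 2 ^ (k + 1))).indicator f t -
        (Ico ((2 * m + 1 : ℝ) / 2 ^ (k + 1)) ((2 * m + 2 : ℝ) / 2 ^ (k + 1))).indicator f t := by
  unfold haar; simp only [indicator_apply, mem_Ico]
  split_ifs with h1 h2
  · exact absurd h2.1 (not_le.2 h1.2)
  all_goals ring

lemma setIntegral_mul_haar {f : ℝ → ℝ} {k m : ℕ} (hf : IntegrableOn f (Ico 0 1))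
    (hm : m < 2 ^ k) :
    ∫ t in Ico 0 1, f t * haar k m t =
      (∫ t in Ico ((2 * m : ℝ) / 2 ^ (k + 1)) ((2 * m + 1 : ℝ) / 2 ^ (k + 1)), f t) -
        ∫ t in Ico ((2 * m + 1 : ℝ) / 2 ^ (k + 1)) ((2 * m + 2 : ℝ) / 2 ^ (k + 1)), f t := by
  have hc := two_mul_add_two_div_two_pow_le_one hm
  have hbc : (2 * m + 1 : ℝ) / 2 ^ (k + 1) ≤ (2 * m + 2 : ℝ) / 2 ^ (k + 1) := by
    gcongr; linarith
  simp_rw [mul_haar_eq_indicator_sub f]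
  rw [integral_sub (hf.indicator measurableSet_Ico) (hf.indicator measurableSet_Ico),
    setIntegral_indicator measurableSet_Ico, setIntegral_indicator measurableSet_Ico,
    inter_eq_right.2 (Ico_subset_Ico (by positivity) (hbc.trans hc)),
    inter_eq_right.2 (Ico_subset_Ico (by positivity) hc)]

/-- A grid point of level `k` is never interior to the support of `h_{k,m}`, so a step there has
the same mass on both halves. -/
lemma integral_Ico_step_haar_halves {k : ℕ} (m : ℕ) {y : ℝ} (hy : OnDyadicGrid k y) :
    ∫ t in Ico ((2 * m : ℝ) / 2 ^ (k + 1)) ((2 * m + 1 : ℝ) / 2 ^ (k + 1)),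
        (if y < t then (1 : ℝ) else 0) =
      ∫ t in Ico ((2 * m + 1 : ℝ) / 2 ^ (k + 1)) ((2 * m + 2 : ℝ) / 2 ^ (k + 1)),
        (if y < t then (1 : ℝ) else 0) := by
  obtain ⟨q, -, rfl⟩ := hy
  have hq : (q : ℝ) / 2 ^ k = 2 * q / 2 ^ (k + 1) := by rw [pow_succ]; field_simp
  rw [integral_Ico_step, integral_Ico_step, hq]
  have hK : (0 : ℝ) < 2 ^ (k + 1) := by positivity
  rcases le_or_gt q m with h | h
  · have h' : (2 * q : ℝ) ≤ 2 * m := by exact_mod_cast Nat.mul_le_mul_left 2 h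
    rw [max_eq_left (div_le_div_of_nonneg_right h' hK.le),
      max_eq_left (div_le_div_of_nonneg_right (by linarith) hK.le)]
    congr 1; ring
  · have h' : (2 * m + 2 : ℝ) ≤ 2 * q := by exact_mod_cast Nat.mul_le_mul_left 2 h
    rw [max_eq_right (div_le_div_of_nonneg_right (by linarith) hK.le),
      max_eq_right (div_le_div_of_nonneg_right (by linarith) hK.le),
      max_eq_right (sub_nonpos.2 (div_le_div_of_nonneg_right (by linarith) hK.le)),
      max_eq_right (sub_nonpos.2 (div_le_div_of_nonneg_right h' hK.le))]

section StepSum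

variable {ι : Type*} [Fintype ι] (c y : ι → ℝ) (d : ℝ)

lemma integrableOn_stepSum (u v : ℝ) :
    IntegrableOn (fun t => ∑ i, c i * (if y i < t then (1 : ℝ) else 0) + d * t) (Ico u v) :=
  (integrable_finsetSum _ fun i _ => (integrableOn_step (y i) u v).const_mul (c i)).add
    ((integrableOn_Ico_id u v).const_mul d)

lemma integral_Ico_stepSum (u v : ℝ) :
    ∫ t in Ico u v, (∑ i, c i * (if y i < t then (1 : ℝ) else 0) + d * t) =
      ∑ i, c i * (∫ t in Ico u v, (if y i < t then (1 : ℝ) else 0)) +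
        d * ∫ t in Ico u v, t := by
  have hsteps (i : ι) := (integrableOn_step (y i) u v).const_mul (c i)
  rw [integral_add (integrable_finsetSum _ fun i _ => hsteps i)
      ((integrableOn_Ico_id u v).const_mul d),
    integral_finsetSum _ fun i _ => hsteps i, integral_const_mul]
  simp_rw [integral_const_mul]

lemma integral_stepSum_mul_haar {k m : ℕ} (hy : ∀ i, OnDyadicGrid k (y i)) (hm : m < 2 ^ k) :
    ∫ t in Ico 0 1, (∑ i, c i * (if y i < t then (1 : ℝ) else 0) + d * t) * haar k m t =
      -d / 2 ^ (2 * k + 2) := by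
  have halves := fun i => integral_Ico_step_haar_halves m (hy i)
  rw [setIntegral_mul_haar (integrableOn_stepSum c y d 0 1) hm, integral_Ico_stepSum,
    integral_Ico_stepSum]
  simp only [halves]
  rw [integral_Ico_id (by gcongr; linarith), integral_Ico_id (by gcongr; linarith),
    show (2 : ℝ) ^ (2 * k + 2) = (2 ^ (k + 1)) ^ 2 by ring]
  field_simp
  ring

end StepSum

lemma discSym_eq_stepSum (n : ℕ) (σ : Fin n → Bool) (t1 t2 : ℝ) :
    discSym n σ t1 t2 =
      ∑ z, (if (symPoint n σ z).1 < t1 then (1 : ℝ) else 0) / 2 ^ (n + 2) *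
          (if (symPoint n σ z).2 < t2 then (1 : ℝ) else 0) + -t1 * t2 := by
  rw [discSym, Finset.sum_div, sub_eq_add_neg, neg_mul]
  congr 1
  refine Finset.sum_congr rfl fun z _ => ?_
  rw [div_mul_eq_mul_div, ite_zero_mul_ite_zero, one_mul]

lemma integral_discSym_mul_haar_snd {n k m : ℕ} (σ : Fin n → Bool) (hk : n ≤ k)
    (hm : m < 2 ^ k) (t1 : ℝ) :
    ∫ t2 in Ico 0 1, discSym n σ t1 t2 * haar k m t2 = t1 / 2 ^ (2 * k + 2) := by
  simp_rw [discSym_eq_stepSum]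
  rw [integral_stepSum_mul_haar _ _ _ (fun z => (onDyadicGrid_symPoint_snd n σ z).mono hk) hm,
    neg_neg]

lemma integral_discSym_snd (n : ℕ) (σ : Fin n → Bool) (t1 : ℝ) :
    ∫ t2 in Ico 0 1, discSym n σ t1 t2 =
      ∑ z, (1 - (symPoint n σ z).2) / 2 ^ (n + 2) *
          (if (symPoint n σ z).1 < t1 then (1 : ℝ) else 0) + -(1 / 2) * t1 := by
  simp_rw [discSym_eq_stepSum]
  rw [integral_Ico_stepSum, integral_Ico_id zero_le_one]
  congr 1
  · refine Finset.sum_congr rfl fun z _ => ?_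
    obtain ⟨hy0, hy1⟩ := (onDyadicGrid_symPoint_snd n σ z).mem_Icc
    rw [integral_Ico_step, max_eq_right hy0, max_eq_left (sub_nonneg.2 hy1)]
    ring
  · ring

/-- Proposition (v): for the local discrepancy `D` of the symmetrized Hammersley type
multiset `R̃_n`, for `k ≥ n` and `m ∈ {0,…,2^k-1}` it holds
`|μ_{(-1,k),(0,m)}(D)| = |μ_{(k,-1),(m,0)}(D)| = 2^{-(2k+3)}`. -/
theorem disc_haar_coeff_neg_large (n : ℕ) (σ : Fin n → Bool) (k m : ℕ)
    (hk : n ≤ k) (hm : m < 2 ^ k) :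
    |∫ t1 in Set.Ico (0 : ℝ) 1, ∫ t2 in Set.Ico (0 : ℝ) 1,
      discSym n σ t1 t2 * haar k m t2| = 1 / 2 ^ (2 * k + 3) ∧
    |∫ t1 in Set.Ico (0 : ℝ) 1, ∫ t2 in Set.Ico (0 : ℝ) 1,
      discSym n σ t1 t2 * haar k m t1| = 1 / 2 ^ (2 * k + 3) := by
  constructor
  · simp_rw [integral_discSym_mul_haar_snd σ hk hm]
    rw [integral_div, integral_Ico_id zero_le_one, abs_of_nonneg (by positivity), pow_succ]
    ring
  · simp_rw [integral_mul_const, integral_discSym_snd]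
    rw [integral_stepSum_mul_haar _ _ _ (fun z => (onDyadicGrid_symPoint_fst n σ z).mono hk) hm,
      abs_of_nonneg (by positivity), pow_succ]
    ring
end
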